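/- arXiv:1206.0513 — 4 statements merged into one kernel-verified Lean document; each statement's English description precedes it below -/
import Mathlib

section
/- The tensor products of integer translates of the blending spline φ form a bivariate partition of unity: for all x, y ∈ ℝ, the family (fun p : ℤ × ℤ => φ(x − p.1) · φ(y − p.2)) has sum 1. -/
open Real

/-- The cardinal cubic B-spline supported on `[0, 4]`. -/
noncomputable def cubicBSpline (x : ℝ) : ℝ :=
  if x ≤ 0 then 0
  else if x ≤ 1 then x ^ 3 / 6
  else if x ≤ 2 then (-3 * x ^ 3 + 12 * x ^ 2 - 12 * x + 4) / 6
  else if x ≤ 3 then (3 * x ^ 3 - 24 * x ^ 2 + 60 * x - 44) / 6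
  else if x ≤ 4 then (4 - x) ^ 3 / 6
  else 0

/-- The blending spline `φ(x) = (1/2)·N(2x+3) + N(2x+2) + (1/2)·N(2x+1)`. -/
noncomputable def blendSpline (x : ℝ) : ℝ :=
  (1 / 2) * cubicBSpline (2 * x + 3) + cubicBSpline (2 * x + 2) +
    (1 / 2) * cubicBSpline (2 * x + 1)

/-! The blending spline is `N(2x+2-m)` summed over `m ∈ {-1, 0, 1}` with weights `1/2, 1, 1/2`.
Summing its integer translates therefore counts every odd shift of `N(2x + 2 - ·)` twice with
weight `1/2` and every even shift once, which reduces the claim to the partition of unity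
`∑ m, N(u - m) = 1` of the cubic B-spline; on a period `(0, 1]` that is a polynomial identity in
the four nonzero terms. Since `φ ≥ 0`, the bivariate sum is the product of two univariate
ones. -/

theorem HasSum.int_even_add_odd {M : Type*} [AddCommMonoid M] [TopologicalSpace M]
    [ContinuousAdd M] {f : ℤ → M} {a b : M} (he : HasSum (fun k ↦ f (2 * k)) a)
    (ho : HasSum (fun k ↦ f (2 * k + 1)) b) : HasSum f (a + b) := by
  have := mul_right_injective₀ (two_ne_zero' ℤ)
  replace ho := ((add_left_injective 1).comp this).hasSum_range_iff.2 ho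
  refine (this.hasSum_range_iff.2 he).add_isCompl ?_ ho
  simpa [Function.comp_def] using Int.isCompl_even_odd

theorem cubicBSpline_of_nonpos {x : ℝ} (hx : x ≤ 0) : cubicBSpline x = 0 := by
  simp [cubicBSpline, hx]

theorem cubicBSpline_of_mem_Ioc_zero_one {x : ℝ} (hx : x ∈ Set.Ioc 0 1) :
    cubicBSpline x = x ^ 3 / 6 := by
  simp [cubicBSpline, hx.1.not_ge, hx.2]

theorem cubicBSpline_of_mem_Ioc_one_two {x : ℝ} (hx : x ∈ Set.Ioc 1 2) :
    cubicBSpline x = (-3 * x ^ 3 + 12 * x ^ 2 - 12 * x + 4) / 6 := by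
  obtain ⟨h1, h2⟩ := hx
  simp [cubicBSpline, (by linarith : ¬ x ≤ 0), h1.not_ge, h2]

theorem cubicBSpline_of_mem_Ioc_two_three {x : ℝ} (hx : x ∈ Set.Ioc 2 3) :
    cubicBSpline x = (3 * x ^ 3 - 24 * x ^ 2 + 60 * x - 44) / 6 := by
  obtain ⟨h2, h3⟩ := hx
  simp [cubicBSpline, (by linarith : ¬ x ≤ 0), (by linarith : ¬ x ≤ 1), h2.not_ge, h3]

theorem cubicBSpline_of_mem_Ioc_three_four {x : ℝ} (hx : x ∈ Set.Ioc 3 4) :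
    cubicBSpline x = (4 - x) ^ 3 / 6 := by
  obtain ⟨h3, h4⟩ := hx
  simp [cubicBSpline, (by linarith : ¬ x ≤ 0), (by linarith : ¬ x ≤ 1),
    (by linarith : ¬ x ≤ 2), h3.not_ge, h4]

theorem cubicBSpline_of_four_lt {x : ℝ} (hx : 4 < x) : cubicBSpline x = 0 := by
  simp [cubicBSpline, (by linarith : ¬ x ≤ 0), (by linarith : ¬ x ≤ 1),
    (by linarith : ¬ x ≤ 2), (by linarith : ¬ x ≤ 3), hx.not_ge]

theorem cubicBSpline_nonneg (x : ℝ) : 0 ≤ cubicBSpline x := by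
  unfold cubicBSpline
  split_ifs with h0 _ h2 _ h4
  · rfl
  · have : 0 < x := not_le.1 h0
    positivity
  · nlinarith [mul_nonneg (sq_nonneg (x - 1)) (sub_nonneg.2 h2)]
  · nlinarith [mul_nonneg (sq_nonneg (3 - x)) (sub_nonneg.2 (not_le.1 h2).le)]
  · have : 0 ≤ 4 - x := sub_nonneg.2 h4
    positivity
  · rfl

theorem blendSpline_nonneg (x : ℝ) : 0 ≤ blendSpline x := by
  unfold blendSpline
  linarith [cubicBSpline_nonneg (2 * x + 3), cubicBSpline_nonneg (2 * x + 2),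
    cubicBSpline_nonneg (2 * x + 1)]

theorem cubicBSpline_add_add_add_eq_one {t : ℝ} (ht : t ∈ Set.Ioc 0 1) :
    cubicBSpline t + cubicBSpline (t + 1) + cubicBSpline (t + 2) + cubicBSpline (t + 3) = 1 := by
  obtain ⟨h0, h1⟩ := ht
  rw [cubicBSpline_of_mem_Ioc_zero_one ⟨h0, h1⟩,
    cubicBSpline_of_mem_Ioc_one_two ⟨by linarith, by linarith⟩,
    cubicBSpline_of_mem_Ioc_two_three ⟨by linarith, by linarith⟩,
    cubicBSpline_of_mem_Ioc_three_four ⟨by linarith, by linarith⟩]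
  ring

theorem hasSum_cubicBSpline_sub_int_of_mem_Ioc {t : ℝ} (ht : t ∈ Set.Ioc 0 1) :
    HasSum (fun m : ℤ ↦ cubicBSpline (t - m)) 1 := by
  convert hasSum_sum_of_ne_finset_zero (L := SummationFilter.unconditional ℤ)
    (s := {0, -1, -2, -3}) fun m hm ↦ ?_
  · simpa [add_assoc] using (cubicBSpline_add_add_add_eq_one ht).symm
  · simp only [Finset.mem_insert, Finset.mem_singleton, not_or] at hm
    rcases le_or_gt m (-4) with hm4 | hm4
    · have : (m : ℝ) ≤ -4 := by exact_mod_cast hm4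
      exact cubicBSpline_of_four_lt (by linarith [ht.1])
    · have : (1 : ℝ) ≤ m := by exact_mod_cast (show 1 ≤ m by omega)
      exact cubicBSpline_of_nonpos (by linarith [ht.2])

theorem hasSum_cubicBSpline_sub_int (u : ℝ) :
    HasSum (fun m : ℤ ↦ cubicBSpline (u - m)) 1 := by
  have ht : u - ⌈u⌉ + 1 ∈ Set.Ioc 0 1 :=
    ⟨by linarith [Int.ceil_lt_add_one u], by linarith [Int.le_ceil u]⟩
  convert (Equiv.subRight (⌈u⌉ - 1)).hasSum_iff.2 (hasSum_cubicBSpline_sub_int_of_mem_Ioc ht)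
    using 2 with m
  simp only [Function.comp_apply, Equiv.subRight_apply]
  push_cast
  ring_nf

theorem hasSum_blendSpline_sub_int (x : ℝ) : HasSum (fun n : ℤ ↦ blendSpline (x - n)) 1 := by
  set g : ℤ → ℝ := fun m ↦ cubicBSpline (2 * x + 2 - m)
  have hg : HasSum g 1 := hasSum_cubicBSpline_sub_int (2 * x + 2)
  have h2 : Function.Injective (fun k : ℤ ↦ 2 * k) := mul_right_injective₀ two_ne_zero
  obtain ⟨a, he⟩ : Summable fun k ↦ g (2 * k) := hg.summable.comp_injective h2
  obtain ⟨b, ho⟩ : Summable fun k ↦ g (2 * k + 1) :=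
    hg.summable.comp_injective ((add_left_injective 1).comp h2)
  have hab : a + b = 1 := (he.int_even_add_odd ho).unique hg
  have ho' := (Equiv.subRight (1 : ℤ)).hasSum_iff.2 ho
  simp only [Function.comp_def, Equiv.subRight_apply] at ho'
  have := ((ho'.mul_left (1 / 2)).add he).add (ho.mul_left (1 / 2))
  rw [show 1 / 2 * b + a + 1 / 2 * b = a + b by ring, hab] at this
  refine this.congr_fun fun n ↦ ?_
  simp only [blendSpline, g]
  push_cast
  ring_nf

theorem blendSpline_bivariate_partition_of_unity (x y : ℝ) :
    HasSum (fun p : ℤ × ℤ => blendSpline (x - p.1) * blendSpline (y - p.2)) 1 := by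
  have hx := hasSum_blendSpline_sub_int x
  have hy := hasSum_blendSpline_sub_int y
  simpa using hx.mul hy <| hx.summable.mul_of_nonneg hy.summable
    (fun _ ↦ blendSpline_nonneg _) (fun _ ↦ blendSpline_nonneg _)
end

section
/- The partition-of-unity blend of local plane models with the spline φ is globally curvature continuous: for arbitrary coefficient families a, b, c : ℤ × ℤ → ℝ, the function g : ℝ × ℝ → ℝ defined by g(x, y) = ∑_{(α,β) ∈ ℤ×ℤ} (a(α,β)·x + b(α,β)·y + c(α,β)) · φ(x − α) · φ(y − β) (a locally finite sum, since φ is compactly supported) is twice continuously differentiable on ℝ², i.e., ContDiff ℝ 2 g. -/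
open Real

/-!
The cubic B-spline is the fourth forward difference of the truncated cubic `max x 0 ^ 3 / 6`, which
is `C²`; hence `N`, and with it `φ`, is `C²`. Since `φ` vanishes outside `[-3/2, 3/2]`, the supports
of the terms of the blend form a locally finite family, so near every point the series is a finite
sum of `C²` functions.
-/

open Set Filter Topology Function

lemma hasDerivAt_max_zero_pow (n : ℕ) (x : ℝ) :
    HasDerivAt (fun t : ℝ => max t 0 ^ (n + 2)) ((n + 2) * max x 0 ^ (n + 1)) x := by
  rcases lt_trichotomy x 0 with hx | rfl | hx
  · have hzero : (fun t : ℝ => max t 0 ^ (n + 2)) =ᶠ[𝓝 x] fun _ => 0 := by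
      filter_upwards [Iio_mem_nhds hx] with t ht
      simp [max_eq_right (mem_Iio.mp ht).le]
    simpa [max_eq_right hx.le] using (hasDerivAt_const x (0 : ℝ)).congr_of_eventuallyEq hzero
  · have hleft : HasDerivWithinAt (fun t : ℝ => max t 0 ^ (n + 2)) 0 (Iic 0) 0 :=
      (hasDerivWithinAt_const 0 _ (0 : ℝ)).congr
        (fun t ht => by simp [max_eq_right (mem_Iic.mp ht)]) (by simp)
    have hright : HasDerivWithinAt (fun t : ℝ => max t 0 ^ (n + 2)) 0 (Ici 0) 0 := by
      have := (hasDerivAt_pow (n + 2) (0 : ℝ)).hasDerivWithinAt (s := Ici 0)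
      simpa using this.congr (fun t ht => by simp [max_eq_left (mem_Ici.mp ht)]) (by simp)
    have hboth := hleft.union hright
    rw [Iic_union_Ici, hasDerivWithinAt_univ] at hboth
    simpa using hboth
  · have hpow : (fun t : ℝ => max t 0 ^ (n + 2)) =ᶠ[𝓝 x] fun t => t ^ (n + 2) := by
      filter_upwards [Ioi_mem_nhds hx] with t ht
      rw [max_eq_left (mem_Ioi.mp ht).le]
    simpa [max_eq_left hx.le] using (hasDerivAt_pow (n + 2) x).congr_of_eventuallyEq hpow

lemma contDiff_max_zero_pow (n : ℕ) : ContDiff ℝ n (fun t : ℝ => max t 0 ^ (n + 1)) := by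
  induction n with
  | zero => simpa using continuous_id.max continuous_const
  | succ n ih =>
    have hderiv :
        deriv (fun t : ℝ => max t 0 ^ (n + 2)) = fun x : ℝ => (n + 2) * max x 0 ^ (n + 1) :=
      funext fun x => (hasDerivAt_max_zero_pow n x).deriv
    push_cast
    rw [contDiff_succ_iff_deriv, hderiv]
    exact ⟨fun x => (hasDerivAt_max_zero_pow n x).differentiableAt, by simp,
      contDiff_const.mul ih⟩

theorem LocallyFinite.prod {ι κ X Y : Type*} [TopologicalSpace X] [TopologicalSpace Y]
    {f : ι → Set X} {g : κ → Set Y} (hf : LocallyFinite f) (hg : LocallyFinite g) :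
    LocallyFinite fun p : ι × κ => f p.1 ×ˢ g p.2 := by
  rintro ⟨x, y⟩
  obtain ⟨U, hU, hUfin⟩ := hf x
  obtain ⟨V, hV, hVfin⟩ := hg y
  refine ⟨U ×ˢ V, prod_mem_nhds hU hV, (hUfin.prod hVfin).subset ?_⟩
  rintro p ⟨q, ⟨hq₁, hq₂⟩, hqU, hqV⟩
  exact ⟨⟨q.1, hq₁, hqU⟩, ⟨q.2, hq₂, hqV⟩⟩

theorem contDiff_tsum_of_locallyFinite {𝕜 ι E F : Type*} [NontriviallyNormedField 𝕜]
    [NormedAddCommGroup E] [NormedSpace 𝕜 E] [NormedAddCommGroup F] [NormedSpace 𝕜 F]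
    {n : WithTop ℕ∞} {f : ι → E → F}
    (hlf : LocallyFinite fun i => support (f i)) (hf : ∀ i, ContDiff 𝕜 n (f i)) :
    ContDiff 𝕜 n fun x => ∑' i, f i x := by
  refine contDiff_iff_contDiffAt.mpr fun x => ?_
  obtain ⟨U, hU, hfin⟩ := hlf x
  refine (ContDiff.sum (s := hfin.toFinset) fun i _ => hf i).contDiffAt.congr_of_eventuallyEq ?_
  filter_upwards [hU] with y hy
  refine tsum_eq_sum fun i hi => ?_
  by_contra hne
  exact hi (hfin.mem_toFinset.mpr ⟨y, hne, hy⟩)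

lemma locallyFinite_support_comp_sub_intCast {M : Type*} [Zero M] {f : ℝ → M} {l u : ℝ}
    (hf : support f ⊆ Icc l u) :
    LocallyFinite fun k : ℤ => support fun x => f (x - k) := by
  refine (locallyFinite_Icc_of_tendsto (f := fun k : ℤ => k + l) (g := fun k : ℤ => k + u)
    ?_ ?_).subset fun k x hx => ?_
  · exact tendsto_atTop_add_const_right _ _ tendsto_intCast_atTop_atTop
  · exact tendsto_atBot_add_const_right _ _ (tendsto_intCast_atBot_iff.mpr tendsto_id)
  · obtain ⟨hl, hu⟩ := hf hx
    exact ⟨by linarith, by linarith⟩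

lemma cubicBSpline_eq (x : ℝ) : cubicBSpline x = (max x 0 ^ 3 - 4 * max (x - 1) 0 ^ 3
    + 6 * max (x - 2) 0 ^ 3 - 4 * max (x - 3) 0 ^ 3 + max (x - 4) 0 ^ 3) / 6 := by
  unfold cubicBSpline
  split_ifs <;>
    repeat (first | rw [max_eq_left (by linarith)] | rw [max_eq_right (by linarith)])
  all_goals ring

lemma contDiff_cubicBSpline : ContDiff ℝ 2 cubicBSpline := by
  have base : ContDiff ℝ 2 fun x : ℝ => max x 0 ^ 3 := by exact_mod_cast contDiff_max_zero_pow 2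
  have shifted (c : ℝ) : ContDiff ℝ 2 fun x : ℝ => max (x - c) 0 ^ 3 :=
    base.comp (contDiff_id.sub contDiff_const)
  rw [funext cubicBSpline_eq]
  exact ((((base.sub ((shifted 1).const_smul (4 : ℝ))).add ((shifted 2).const_smul (6 : ℝ))).sub
    ((shifted 3).const_smul (4 : ℝ))).add (shifted 4)).div_const 6

lemma support_cubicBSpline_subset : support cubicBSpline ⊆ Ioo 0 4 := by
  refine support_subset_iff'.mpr fun x hx => ?_
  rw [mem_Ioo, not_and_or, not_lt, not_lt] at hx
  unfold cubicBSpline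
  rcases hx with h | h <;> split_ifs <;>
    first | rfl | linarith | (rw [show x = 4 by linarith]; norm_num)

lemma contDiff_blendSpline : ContDiff ℝ 2 blendSpline := by
  have shifted (c : ℝ) : ContDiff ℝ 2 fun x : ℝ => cubicBSpline (2 * x + c) :=
    contDiff_cubicBSpline.comp ((contDiff_const.mul contDiff_id).add contDiff_const)
  exact ((contDiff_const.mul (shifted 3)).add (shifted 2)).add (contDiff_const.mul (shifted 1))

lemma support_blendSpline_subset : support blendSpline ⊆ Icc (-3 / 2) (3 / 2) := by
  refine support_subset_iff'.mpr fun x hx => ?_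
  have vanish (c : ℝ) (hc : 2 * x + c ∉ Ioo 0 4) : cubicBSpline (2 * x + c) = 0 :=
    notMem_support.mp fun h => hc (support_cubicBSpline_subset h)
  rw [mem_Icc, not_and_or, not_le, not_le] at hx
  unfold blendSpline
  rw [vanish 3, vanish 2, vanish 1]
  · ring
  all_goals rintro ⟨h₀, h₄⟩; rcases hx with h | h <;> linarith

theorem blend_of_planes_contDiff (a b c : ℤ × ℤ → ℝ) :
    ContDiff ℝ 2 (fun q : ℝ × ℝ =>
      ∑' p : ℤ × ℤ, (a p * q.1 + b p * q.2 + c p) *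
        blendSpline (q.1 - p.1) * blendSpline (q.2 - p.2)) := by
  refine contDiff_tsum_of_locallyFinite ?_ fun p => ?_
  · have hφ := locallyFinite_support_comp_sub_intCast support_blendSpline_subset
    refine (hφ.prod hφ).subset fun p q hq => ?_
    exact ⟨right_ne_zero_of_mul (left_ne_zero_of_mul hq), right_ne_zero_of_mul hq⟩
  · have plane : ContDiff ℝ 2 fun q : ℝ × ℝ => a p * q.1 + b p * q.2 + c p := by fun_prop
    exact (plane.mul (contDiff_blendSpline.comp (contDiff_fst.sub contDiff_const))).mul
      (contDiff_blendSpline.comp (contDiff_snd.sub contDiff_const))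
end

section
/- The translates of the exponential blender ψ by integer multiples of a form a partition of unity: for every x ∈ ℝ, the family (fun k : ℤ => ψ(x − k·a)) has sum 1 (at most two terms are nonzero). -/
open Real

/-- The compactly supported exponential blender with smoothing parameter `s`
and support half-width `a`. -/
noncomputable def expBlender (s a : ℝ) (x : ℝ) : ℝ :=
  if x = 0 then 1
  else if a ≤ |x| then 0
  else 1 / (Real.exp (s * (1 / (1 - |x| / a) - 1 / (|x| / a))) + 1)

/-!
On `(0, a)` the blender is the logistic sigmoid of `-s (1/(1-u) - 1/u)` with `u = |x|/a`, and
`u ↦ 1 - u` flips the sign of that exponent; since `σ(-y) = 1 - σ(y)`, this gives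
`ψ(t) + ψ(t - a) = 1` for `0 ≤ t < a`. Reindexing by `⌊x / a⌋` reduces the sum to such a `t`, and
since `ψ` vanishes outside `(-a, a)` only the terms `k = 0, 1` of `∑ₖ ψ(t - k a)` survive.
-/

namespace expBlender

variable {s a : ℝ}

lemma eq_zero_of_le_abs (ha : 0 < a) {x : ℝ} (h : a ≤ |x|) : expBlender s a x = 0 := by
  have hx : x ≠ 0 := by rintro rfl; simp at h; linarith
  rw [expBlender, if_neg hx, if_pos h]

lemma eq_sigmoid {x : ℝ} (hx : x ≠ 0) (hxa : |x| < a) :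
    expBlender s a x = sigmoid (-(s * (1 / (1 - |x| / a) - 1 / (|x| / a)))) := by
  rw [expBlender, if_neg hx, if_neg hxa.not_ge, sigmoid_def, neg_neg, add_comm, one_div]

lemma add_sub_self_eq_one (ha : 0 < a) {t : ℝ} (ht₀ : 0 ≤ t) (hta : t < a) :
    expBlender s a t + expBlender s a (t - a) = 1 := by
  rcases ht₀.eq_or_lt with rfl | ht_pos
  · rw [zero_sub, eq_zero_of_le_abs (x := -a) ha (by rw [abs_neg, abs_of_pos ha])]
    simp [expBlender]
  have habs : |t - a| / a = 1 - t / a := by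
    rw [abs_of_neg (by linarith), neg_sub, sub_div, div_self ha.ne']
  rw [eq_sigmoid ht_pos.ne' (by rwa [abs_of_pos ht_pos]),
    eq_sigmoid (by linarith) (by rw [abs_of_neg (by linarith)]; linarith),
    habs, abs_of_pos ht_pos, sub_sub_cancel]
  set y := s * (1 / (1 - t / a) - 1 / (t / a))
  have hy : -(s * (1 / (t / a) - 1 / (1 - t / a))) = y := by ring
  rw [hy, ← neg_neg y, sigmoid_neg (-y), neg_neg, add_sub_cancel]

lemma hasSum_sub_intCast_mul_of_mem_Ico (ha : 0 < a) {t : ℝ} (ht : t ∈ Set.Ico 0 a) :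
    HasSum (fun k : ℤ => expBlender s a (t - k * a)) 1 := by
  have hsupp : ∀ k ∉ ({0, 1} : Finset ℤ), expBlender s a (t - k * a) = 0 := by
    intro k hk
    simp only [Finset.mem_insert, Finset.mem_singleton, not_or] at hk
    apply eq_zero_of_le_abs ha
    rcases lt_or_gt_of_ne hk.1 with hk_neg | hk_pos
    · have : (k : ℝ) ≤ -1 := by exact_mod_cast Int.le_sub_one_of_lt hk_neg
      rw [abs_of_nonneg (by nlinarith [ht.1])]
      nlinarith [ht.1]
    · have : (2 : ℝ) ≤ k := by exact_mod_cast (show 2 ≤ k by omega)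
      rw [abs_of_neg (by nlinarith [ht.2])]
      nlinarith [ht.2]
  have hpair := add_sub_self_eq_one (s := s) ha ht.1 ht.2
  simpa [Finset.sum_pair zero_ne_one, hpair] using hasSum_sum_of_ne_finset_zero hsupp

end expBlender

theorem expBlender_partition_of_unity_general (s a : ℝ) (ha : 0 < a) (x : ℝ) :
    HasSum (fun k : ℤ => expBlender s a (x - k * a)) 1 := by
  set n := ⌊x / a⌋
  have hfract : Int.fract (x / a) * a ∈ Set.Ico 0 a :=
    ⟨by have := Int.fract_nonneg (x / a); positivity,
      by simpa using mul_lt_mul_of_pos_right (Int.fract_lt_one (x / a)) ha⟩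
  have hshift : Int.fract (x / a) * a = x - n * a := by
    rw [Int.fract, sub_mul, div_mul_cancel₀ x ha.ne']
  refine (Equiv.addRight n).hasSum_iff.mp ?_
  convert expBlender.hasSum_sub_intCast_mul_of_mem_Ico (s := s) ha hfract using 3 with k
  rw [Function.comp_apply, Equiv.coe_addRight, Int.cast_add, hshift]
  congr 1
  ring

theorem expBlender_partition_of_unity (s a : ℝ) (hs : 0 < s) (ha : 0 < a) (x : ℝ) :
    HasSum (fun k : ℤ => expBlender s a (x - k * a)) 1 :=
  expBlender_partition_of_unity_general s a ha x
end

section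
/- The tensor products of the a-translates of the exponential blender ψ form a bivariate partition of unity: for all x, y ∈ ℝ, the family (fun p : ℤ × ℤ => ψ(x − p.1·a) · ψ(y − p.2·a)) has sum 1. -/
open Real

section

variable {s a : ℝ}

lemma expBlender_zero : expBlender s a 0 = 1 := if_pos rfl

lemma expBlender_eq_zero_of_le (ha : 0 < a) {x : ℝ} (h : a ≤ |x|) : expBlender s a x = 0 := by
  have hx : x ≠ 0 := by rintro rfl; simp at h; linarith
  rw [expBlender, if_neg hx, if_pos h]

lemma expBlender_eq_sigmoid {x : ℝ} (hx : 0 < |x|) (hxa : |x| < a) :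
    expBlender s a x = sigmoid (s * (1 / (|x| / a) - 1 / (1 - |x| / a))) := by
  rw [expBlender, if_neg (abs_pos.mp hx), if_neg hxa.not_ge, sigmoid_def, one_div, add_comm]
  congr 3
  ring

lemma expBlender_nonneg (s a x : ℝ) : 0 ≤ expBlender s a x := by
  unfold expBlender
  split_ifs <;> positivity

lemma expBlender_add_expBlender_sub (ha : 0 < a) {t : ℝ} (ht₀ : 0 ≤ t) (hta : t ≤ a) :
    expBlender s a t + expBlender s a (t - a) = 1 := by
  rcases ht₀.eq_or_lt with rfl | ht₀
  · rw [zero_sub, expBlender_zero, expBlender_eq_zero_of_le ha (by rw [abs_neg, abs_of_pos ha]),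
      add_zero]
  rcases hta.eq_or_lt with rfl | hta
  · rw [sub_self, expBlender_zero, expBlender_eq_zero_of_le ha (abs_of_pos ht₀).ge, zero_add]
  have ht : |t| = t := abs_of_pos ht₀
  have hta' : |t - a| = a - t := by rw [abs_of_neg (by linarith)]; ring
  rw [expBlender_eq_sigmoid (by rwa [ht]) (by rwa [ht]),
    expBlender_eq_sigmoid (by rw [hta']; linarith) (by rw [hta']; linarith), ht, hta',
    show (a - t) / a = 1 - t / a by field_simp, sub_sub_cancel, ← neg_sub, mul_neg,
    sigmoid_neg, sub_add_cancel]

lemma hasSum_expBlender_sub_int_mul (ha : 0 < a) (x : ℝ) :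
    HasSum (fun n : ℤ => expBlender s a (x - n * a)) 1 := by
  set m := ⌊x / a⌋
  have hm₀ : 0 ≤ x - m * a := Int.sub_floor_div_mul_nonneg x ha
  have hma : x - m * a < a := Int.sub_floor_div_mul_lt x ha
  have hpair : ∑ n ∈ {m, m + 1}, expBlender s a (x - n * a) = 1 := by
    rw [Finset.sum_pair (by omega), ← expBlender_add_expBlender_sub ha hm₀ hma.le]
    push_cast
    ring_nf
  rw [← hpair]
  refine hasSum_sum_of_ne_finset_zero fun n hn => ?_
  simp only [Finset.mem_insert, Finset.mem_singleton, not_or] at hn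
  obtain ⟨hnm, hnm₁⟩ := hn
  apply expBlender_eq_zero_of_le ha
  rcases lt_or_gt_of_ne hnm with h | h
  · have : (n : ℝ) + 1 ≤ m := by exact_mod_cast h
    rw [abs_of_pos (by nlinarith)]
    nlinarith
  · have : (m : ℝ) + 2 ≤ n := by exact_mod_cast (show m + 2 ≤ n by omega)
    rw [abs_of_neg (by nlinarith)]
    nlinarith

end

theorem expBlender_bivariate_partition_of_unity_general (s a : ℝ) (ha : 0 < a)
    (x y : ℝ) :
    HasSum (fun p : ℤ × ℤ =>
      expBlender s a (x - p.1 * a) * expBlender s a (y - p.2 * a)) 1 := by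
  have hx := hasSum_expBlender_sub_int_mul (s := s) ha x
  have hy := hasSum_expBlender_sub_int_mul (s := s) ha y
  simpa using hx.mul hy <| hx.summable.mul_of_nonneg hy.summable
    (fun _ => expBlender_nonneg _ _ _) (fun _ => expBlender_nonneg _ _ _)

theorem expBlender_bivariate_partition_of_unity (s a : ℝ) (hs : 0 < s) (ha : 0 < a)
    (x y : ℝ) :
    HasSum (fun p : ℤ × ℤ =>
      expBlender s a (x - p.1 * a) * expBlender s a (y - p.2 * a)) 1 :=
  expBlender_bivariate_partition_of_unity_general s a ha x y
end
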